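/- The Euclidean norm is the unique fixed point of B on O: if f ∈ O satisfies Bf = f, then f(p) = √⟨p,p⟩ for all p ∈ ℝⁿ₊; conversely, the Euclidean norm restricted to ℝⁿ₊ satisfies Bf = f. -/
import Mathlib


open Finset

noncomputable def inn {n : ℕ} (p q : Fin n → ℝ) : ℝ := ∑ i, p i * q i

noncomputable def nrm {n : ℕ} (p : Fin n → ℝ) : ℝ := Real.sqrt (∑ i, (p i)^2)

def Orth (n : ℕ) : Set (Fin n → ℝ) := {p | ∀ i, 0 ≤ p i}

noncomputable def B {n : ℕ} (f : (Fin n → ℝ) → ℝ) (p : Fin n → ℝ) : ℝ :=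
  sSup {x | ∃ q ∈ Orth n, q ≠ 0 ∧ x = inn p q / f q}

def MemO {n : ℕ} (f : (Fin n → ℝ) → ℝ) : Prop :=
  (∀ p ∈ Orth n, ∀ l : ℝ, 0 < l → f (l • p) = l * f p) ∧
  (∀ p ∈ Orth n, p ≠ 0 → 0 < f p) ∧
  (∃ c₁ c₂ : ℝ, 0 < c₁ ∧ 0 < c₂ ∧
    ∀ p ∈ Orth n, c₁ * nrm p ≤ f p ∧ f p ≤ c₂ * nrm p) ∧
  ContinuousOn f (Orth n)

def PositiveConvex {n : ℕ} (C : Set (Fin n → ℝ)) : Prop :=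
  Convex ℝ C ∧ ∀ p₀ ∈ Orth n, p₀ ∉ C → ∃ q ∈ Orth n, ∃ γ : ℝ, 0 < γ ∧
    γ ≤ inn p₀ q ∧ ∀ p ∈ C, inn p q < γ

lemma nrm_nonneg {n : ℕ} (p : Fin n → ℝ) : 0 ≤ nrm p := Real.sqrt_nonneg _

lemma nrm_eq_sqrt_inn {n : ℕ} (p : Fin n → ℝ) : nrm p = Real.sqrt (inn p p) := by
  simp [nrm, inn, sq]

lemma inn_self_eq_sq {n : ℕ} (p : Fin n → ℝ) : inn p p = nrm p ^ 2 := by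
  rw [nrm_eq_sqrt_inn, Real.sq_sqrt]
  exact Finset.sum_nonneg fun i _ => mul_self_nonneg _

lemma nrm_pos {n : ℕ} {p : Fin n → ℝ} (hp : p ≠ 0) : 0 < nrm p := by
  apply Real.sqrt_pos.2
  obtain ⟨i, hi⟩ := Function.ne_iff.1 hp
  exact Finset.sum_pos' (fun j _ => sq_nonneg _) ⟨i, Finset.mem_univ i, sq_pos_iff.2 hi⟩

lemma inn_nonneg {n : ℕ} {p q : Fin n → ℝ} (hp : p ∈ Orth n) (hq : q ∈ Orth n) :
    0 ≤ inn p q :=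
  Finset.sum_nonneg fun i _ => mul_nonneg (hp i) (hq i)

lemma cauchy_schwarz {n : ℕ} (p q : Fin n → ℝ) : inn p q ≤ nrm p * nrm q :=
  Real.sum_mul_le_sqrt_mul_sqrt _ _ _

theorem B_fixed_iff_euclidean_norm {n : ℕ} (f : (Fin n → ℝ) → ℝ) (hf : MemO f) :
    (∀ p ∈ Orth n, B f p = f p) ↔ ∀ p ∈ Orth n, f p = Real.sqrt (inn p p) := by
  obtain ⟨hhom, hpos, ⟨c₁, c₂, hc₁, hc₂, hbd⟩, hcont⟩ := hf
  have hf0 : f 0 = 0 := by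
    have h := hbd 0 (fun i => le_refl 0)
    have : nrm (0 : Fin n → ℝ) = 0 := by simp [nrm]
    rw [this, mul_zero, mul_zero] at h
    linarith [h.1, h.2]
  -- boundedness of the sup set
  have hbdd : ∀ p ∈ Orth n, BddAbove {x | ∃ q ∈ Orth n, q ≠ 0 ∧ x = inn p q / f q} := by
    intro p hp
    refine ⟨nrm p / c₁, ?_⟩
    rintro x ⟨q, hq, hq0, rfl⟩
    have hfq : 0 < f q := hpos q hq hq0
    have hnq : 0 < nrm q := nrm_pos hq0
    rw [div_le_div_iff₀ hfq hc₁]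
    calc inn p q * c₁ ≤ (nrm p * nrm q) * c₁ := by
          have := cauchy_schwarz p q
          nlinarith
      _ = nrm p * (c₁ * nrm q) := by ring
      _ ≤ nrm p * f q := by
          have := (hbd q hq).1
          exact mul_le_mul_of_nonneg_left this (nrm_nonneg p)
  constructor
  · -- forward: fixed point implies euclidean norm
    intro hB
    -- Step A : nrm q ≤ f q for q ≠ 0
    have stepA : ∀ q ∈ Orth n, q ≠ 0 → nrm q ≤ f q := by
      intro q hq hq0
      have hfq : 0 < f q := hpos q hq hq0
      have hmem : inn q q / f q ∈ {x | ∃ r ∈ Orth n, r ≠ 0 ∧ x = inn q r / f r} :=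
        ⟨q, hq, hq0, rfl⟩
      have hle : inn q q / f q ≤ f q := by
        have := le_csSup (hbdd q hq) hmem
        rwa [show sSup {x | ∃ r ∈ Orth n, r ≠ 0 ∧ x = inn q r / f r} = B f q from rfl,
          hB q hq] at this
      have h2 : inn q q ≤ f q ^ 2 := by
        rw [div_le_iff₀ hfq] at hle; nlinarith
      rw [inn_self_eq_sq] at h2
      nlinarith [nrm_nonneg q]
    intro p hp
    rw [← nrm_eq_sqrt_inn]
    by_cases hp0 : p = 0
    · rw [hp0, hf0]; simp [nrm]
    · refine le_antisymm ?_ (stepA p hp hp0)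
      -- f p = B f p ≤ nrm p
      rw [← hB p hp]
      apply Real.sSup_le _ (nrm_nonneg p)
      rintro x ⟨q, hq, hq0, rfl⟩
      have hnq : 0 < nrm q := nrm_pos hq0
      have hfq : 0 < f q := hpos q hq hq0
      calc inn p q / f q ≤ inn p q / nrm q := by
            apply div_le_div_of_nonneg_left (inn_nonneg hp hq) hnq (stepA q hq hq0)
        _ ≤ nrm p := by
            rw [div_le_iff₀ hnq]; exact cauchy_schwarz p q
  · -- backward: euclidean norm is fixed
    intro hE p hp
    have hfp : f p = nrm p := by rw [hE p hp, nrm_eq_sqrt_inn]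
    rw [hfp]
    -- upper bound
    have hupper : B f p ≤ nrm p := by
      apply Real.sSup_le _ (nrm_nonneg p)
      rintro x ⟨q, hq, hq0, rfl⟩
      have hnq : 0 < nrm q := nrm_pos hq0
      rw [hE q hq, ← nrm_eq_sqrt_inn, div_le_iff₀ hnq]
      exact cauchy_schwarz p q
    refine le_antisymm hupper ?_
    by_cases hp0 : p = 0
    · -- nrm 0 = 0 ≤ B f 0
      have : nrm p = 0 := by rw [hp0]; simp [nrm]
      rw [this]
      rcases Nat.eq_zero_or_pos n with hn | hn
      · -- n = 0 : the set is empty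
        have hempty : {x | ∃ q ∈ Orth n, q ≠ 0 ∧ x = inn p q / f q} = ∅ := by
          ext x
          simp only [Set.mem_setOf_eq, Set.mem_empty_iff_false, iff_false]
          rintro ⟨q, _, hq0, _⟩
          exact hq0 (by subst hn; exact Subsingleton.elim q 0)
        rw [B, hempty, Real.sSup_empty]
      · -- n ≥ 1 : witness q = 1
        have h1 : (fun _ : Fin n => (1:ℝ)) ∈ Orth n := fun i => zero_le_one
        have h10 : (fun _ : Fin n => (1:ℝ)) ≠ 0 := by
          intro h
          have : (1:ℝ) = 0 := congrFun h ⟨0, hn⟩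
          norm_num at this
        have hmem : (0:ℝ) ∈ {x | ∃ q ∈ Orth n, q ≠ 0 ∧ x = inn p q / f q} := by
          refine ⟨fun _ => 1, h1, h10, ?_⟩
          rw [hp0]
          simp [inn]
        exact le_csSup (hbdd p hp) hmem
    · -- p ≠ 0 : witness q = p
      have hnp : 0 < nrm p := nrm_pos hp0
      have hmem : nrm p ∈ {x | ∃ q ∈ Orth n, q ≠ 0 ∧ x = inn p q / f q} := by
        refine ⟨p, hp, hp0, ?_⟩
        rw [hfp, inn_self_eq_sq, sq, mul_div_assoc, div_self (ne_of_gt hnp), mul_one]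
      exact le_csSup (hbdd p hp) hmem
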